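/- arXiv:1507.01074 — 10 statements merged into one kernel-verified Lean document; each statement's English description precedes it below -/
import Mathlib

section
/- Let I be an interval and f, g : I → ℝ. If for all x, y ∈ I and t ∈ [0,1] we have f(tx+(1-t)y) ≤ t·g(x)+(1-t)·g(y) and g(tx+(1-t)y) ≥ t·f(x)+(1-t)·f(y), then there exists an affine function h : ℝ → ℝ such that f(x) ≤ h(x) ≤ g(x) for all x ∈ I. -/
/-!
Subtracting a suitable linear function reduces the problem to finding a constant between
`f - a·x` and `g - a·x`, i.e. to a slope `a` with `f x - g u ≤ a (x - u)` and
`a (y - s) ≤ g y - f s` whenever `u < x` and `s < y`. Such an `a` exists because every slope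
`(f v - g u) / (v - u)` is at most every slope `(g t - f s) / (t - s)`. When `v ≤ t`, this follows
by comparing with the chord of `g` over `[u, t]`, which lies above `f` at `v` and at `s` (if `u ≤ s`),
and with the chord of `f` over `[s, v]`, which lies below `g` at `u` (if `s ≤ u`); the case
`t ≤ v` is the same statement for the pair `(-g, -f)`.
-/

open Set

/-- The other sandwich condition, `g` above the chords of `f`, is `BelowChordsOn I (-g) (-f)`. -/
def BelowChordsOn (I : Set ℝ) (f g : ℝ → ℝ) : Prop :=
  ∀ x ∈ I, ∀ y ∈ I, ∀ t ∈ Icc (0 : ℝ) 1, f (t * x + (1 - t) * y) ≤ t * g x + (1 - t) * g y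

lemma exists_forall_le_and_le_of_forall_le {ι : Type*} {s : Set ι} {φ γ : ι → ℝ}
    (h : ∀ x ∈ s, ∀ y ∈ s, φ x ≤ γ y) : ∃ b, ∀ x ∈ s, φ x ≤ b ∧ b ≤ γ x := by
  rcases s.eq_empty_or_nonempty with rfl | hs
  · simp
  obtain ⟨b, hub, hlb⟩ := exists_between_of_forall_le (hs.image φ) (hs.image γ)
    (by simpa only [forall_mem_image] using h)
  exact ⟨b, fun x hx => ⟨hub (mem_image_of_mem φ hx), hlb (mem_image_of_mem γ hx)⟩⟩

namespace BelowChordsOn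

variable {I : Set ℝ} {f g : ℝ → ℝ}

lemma le (h : BelowChordsOn I f g) {x : ℝ} (hx : x ∈ I) : f x ≤ g x := by
  simpa using h x hx x hx 1 (by norm_num)

lemma mul_le (h : BelowChordsOn I f g) {x y z : ℝ} (hx : x ∈ I) (hy : y ∈ I) (hxy : x < y)
    (hxz : x ≤ z) (hzy : z ≤ y) : (y - x) * f z ≤ (y - z) * g x + (z - x) * g y := by
  have hyx : 0 < y - x := sub_pos.2 hxy
  have ht : (y - z) / (y - x) ∈ Icc (0 : ℝ) 1 :=
    ⟨div_nonneg (by linarith) hyx.le, (div_le_one hyx).2 (by linarith)⟩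
  have hz : (y - z) / (y - x) * x + (1 - (y - z) / (y - x)) * y = z := by
    field_simp
    ring
  have key := mul_le_mul_of_nonneg_left (h x hx y hy _ ht) hyx.le
  rw [hz] at key
  calc (y - x) * f z ≤ (y - x) * ((y - z) / (y - x) * g x + (1 - (y - z) / (y - x)) * g y) := key
    _ = (y - z) * g x + (z - x) * g y := by
      field_simp
      ring

lemma cross_mul_le_of_le (hfg : BelowChordsOn I f g) (hgf : BelowChordsOn I (-g) (-f))
    {u v s t : ℝ} (hu : u ∈ I) (hv : v ∈ I) (hs : s ∈ I) (ht : t ∈ I) (huv : u < v) (hst : s < t)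
    (hvt : v ≤ t) : (f v - g u) * (t - s) ≤ (g t - f s) * (v - u) := by
  have hfv := hfg.mul_le hu ht (by linarith) huv.le hvt
  rcases le_total u s with hus | hsu
  · have hfs := hfg.mul_le hu ht (by linarith) hus hst.le
    have hm : (t - u) * ((f v - g u) * (t - s)) ≤ (t - u) * ((g t - f s) * (v - u)) := by
      nlinarith [mul_le_mul_of_nonneg_left hfv (sub_nonneg.2 hst.le),
        mul_le_mul_of_nonneg_left hfs (sub_nonneg.2 huv.le)]
    exact le_of_mul_le_mul_left hm (by linarith)
  · have hgu := hgf.mul_le hs hv (by linarith) hsu huv.le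
    simp only [Pi.neg_apply] at hgu
    linarith

lemma cross_slope_le (hfg : BelowChordsOn I f g) (hgf : BelowChordsOn I (-g) (-f))
    {u v s t : ℝ} (hu : u ∈ I) (hv : v ∈ I) (hs : s ∈ I) (ht : t ∈ I) (huv : u < v)
    (hst : s < t) : (f v - g u) / (v - u) ≤ (g t - f s) / (t - s) := by
  rw [div_le_div_iff₀ (sub_pos.2 huv) (sub_pos.2 hst)]
  rcases le_total v t with hvt | htv
  · exact cross_mul_le_of_le hfg hgf hu hv hs ht huv hst hvt
  · -- the pair `(-g, -f)` satisfies the same hypotheses, with the roles of the intervals exchanged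
    have := cross_mul_le_of_le hgf (by simpa only [neg_neg] using hfg) hs ht hu hv hst huv htv
    simp only [Pi.neg_apply] at this
    linarith

lemma exists_slope (hfg : BelowChordsOn I f g) (hgf : BelowChordsOn I (-g) (-f)) :
    ∃ a : ℝ, ∀ x ∈ I, ∀ y ∈ I, f x - a * x ≤ g y - a * y := by
  obtain ⟨a, ha⟩ := exists_forall_le_and_le_of_forall_le
    (s := {p : ℝ × ℝ | p.1 ∈ I ∧ p.2 ∈ I ∧ p.1 < p.2})
    (φ := fun p => (f p.2 - g p.1) / (p.2 - p.1)) (γ := fun p => (g p.2 - f p.1) / (p.2 - p.1))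
    (fun _ ⟨hu, hv, huv⟩ _ ⟨hs, ht, hst⟩ => hfg.cross_slope_le hgf hu hv hs ht huv hst)
  refine ⟨a, fun x hx y hy => ?_⟩
  rcases lt_trichotomy x y with hxy | rfl | hyx
  · have := (ha (x, y) ⟨hx, hy, hxy⟩).2
    rw [le_div_iff₀ (sub_pos.2 hxy)] at this
    linarith
  · linarith [hfg.le hx]
  · have := (ha (y, x) ⟨hy, hx, hyx⟩).1
    rw [div_le_iff₀ (sub_pos.2 hyx)] at this
    linarith

end BelowChordsOn

theorem stmt_0_general (I : Set ℝ)
    (f g : ℝ → ℝ)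
    (h1 : ∀ x ∈ I, ∀ y ∈ I, ∀ t ∈ Set.Icc (0:ℝ) 1,
      f (t * x + (1 - t) * y) ≤ t * g x + (1 - t) * g y)
    (h2 : ∀ x ∈ I, ∀ y ∈ I, ∀ t ∈ Set.Icc (0:ℝ) 1,
      t * f x + (1 - t) * f y ≤ g (t * x + (1 - t) * y)) :
    ∃ a b : ℝ, ∀ x ∈ I, f x ≤ a * x + b ∧ a * x + b ≤ g x := by
  have hgf : BelowChordsOn I (-g) (-f) := fun x hx y hy t ht => by
    simp only [Pi.neg_apply]
    linarith [h2 x hx y hy t ht]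
  obtain ⟨a, ha⟩ := BelowChordsOn.exists_slope h1 hgf
  obtain ⟨b, hb⟩ := exists_forall_le_and_le_of_forall_le ha
  exact ⟨a, b, fun x hx => ⟨by linarith [(hb x hx).1], by linarith [(hb x hx).2]⟩⟩

theorem stmt_0 (I : Set ℝ) (hI : I.OrdConnected) (hne : I.Nonempty)
    (f g : ℝ → ℝ)
    (h1 : ∀ x ∈ I, ∀ y ∈ I, ∀ t ∈ Set.Icc (0:ℝ) 1,
      f (t * x + (1 - t) * y) ≤ t * g x + (1 - t) * g y)
    (h2 : ∀ x ∈ I, ∀ y ∈ I, ∀ t ∈ Set.Icc (0:ℝ) 1,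
      t * f x + (1 - t) * f y ≤ g (t * x + (1 - t) * y)) :
    ∃ a b : ℝ, ∀ x ∈ I, f x ≤ a * x + b ∧ a * x + b ≤ g x :=
  stmt_0_general I f g h1 h2
end

section
/- Let I be an interval and φ, ψ : I → ℝ such that ψ − φ is monotone increasing on I and ψ is convex on I. Then for all t ∈ (0,1) and all x, y ∈ I with x ≤ y: (1−t)·φ(x) + t·ψ(y) ≥ (1−t)·φ((1−t)x + ty) + t·ψ((1−t)x + ty). -/
theorem stmt_3 (I : Set ℝ) (hI : I.OrdConnected)
    (φ ψ : ℝ → ℝ)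
    (hmono : ∀ u ∈ I, ∀ v ∈ I, v ≤ u → ψ v - φ v ≤ ψ u - φ u)
    (hconv : ∀ x ∈ I, ∀ y ∈ I, ∀ t ∈ Set.Icc (0:ℝ) 1,
      ψ (t * x + (1 - t) * y) ≤ t * ψ x + (1 - t) * ψ y) :
    ∀ t ∈ Set.Ioo (0:ℝ) 1, ∀ x ∈ I, ∀ y ∈ I, x ≤ y →
      (1 - t) * φ ((1 - t) * x + t * y) + t * ψ ((1 - t) * x + t * y) ≤
        (1 - t) * φ x + t * ψ y := by
  intro t ht x hx y hy hxy
  obtain ⟨ht0, ht1⟩ := ht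
  set z := (1 - t) * x + t * y with hz
  have hxz : x ≤ z := by nlinarith
  have hzy : z ≤ y := by nlinarith
  have hzI : z ∈ I := hI.out hx hy ⟨hxz, hzy⟩
  have h1 : ψ x - φ x ≤ ψ z - φ z := hmono z hzI x hx hxz
  have h2 : ψ ((1 - t) * x + (1 - (1 - t)) * y) ≤ (1 - t) * ψ x + (1 - (1 - t)) * ψ y :=
    hconv x hx y hy (1 - t) ⟨by linarith, by linarith⟩
  have h2' : ψ z ≤ (1 - t) * ψ x + t * ψ y := by
    have : (1 : ℝ) - (1 - t) = t := by ring
    rwa [this] at h2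
  nlinarith
end

section
/- Let I be an interval and φ, ψ : I → ℝ such that ψ − φ is monotone decreasing on I and ψ is concave on I. Then for all t ∈ (0,1) and all x, y ∈ I with x ≤ y: (1−t)·φ(x) + t·ψ(y) ≤ (1−t)·φ((1−t)x + ty) + t·ψ((1−t)x + ty). -/
theorem stmt_4 (I : Set ℝ) (hI : I.OrdConnected)
    (φ ψ : ℝ → ℝ)
    (hmono : ∀ u ∈ I, ∀ v ∈ I, v ≤ u → ψ u - φ u ≤ ψ v - φ v)
    (hconc : ∀ x ∈ I, ∀ y ∈ I, ∀ t ∈ Set.Icc (0:ℝ) 1,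
      t * ψ x + (1 - t) * ψ y ≤ ψ (t * x + (1 - t) * y)) :
    ∀ t ∈ Set.Ioo (0:ℝ) 1, ∀ x ∈ I, ∀ y ∈ I, x ≤ y →
      (1 - t) * φ x + t * ψ y ≤
        (1 - t) * φ ((1 - t) * x + t * y) + t * ψ ((1 - t) * x + t * y) := by
  intro t ht x hx y hy hxy
  obtain ⟨ht0, ht1⟩ := ht
  set z := (1 - t) * x + t * y with hz
  have hxz : x ≤ z := by nlinarith
  have hzy : z ≤ y := by nlinarith
  have hzI : z ∈ I := hI.out hx hy ⟨hxz, hzy⟩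
  have h1 : ψ z - φ z ≤ ψ x - φ x := hmono z hzI x hx hxz
  have h2 : (1 - t) * ψ x + (1 - (1 - t)) * ψ y ≤ ψ ((1 - t) * x + (1 - (1 - t)) * y) :=
    hconc x hx y hy (1 - t) ⟨by linarith, by linarith⟩
  have h2' : (1 - t) * ψ x + t * ψ y ≤ ψ z := by
    simpa [hz] using h2
  nlinarith
end

section
/- If f : I → ℝ is convex on an interval I, then for all x, y, z ∈ I: (f(x)+f(y)+f(z))/3 + f((x+y+z)/3) ≥ (2/3)·(f((x+y)/2) + f((y+z)/2) + f((x+z)/2)). -/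
/-!
Two of the points, say `x` and `y`, lie on the same side of the mean
`m = (x + y + z) / 3`, e.g. below it. Then `(x + z) / 2` and `(y + z) / 2` lie in `[m, z]`, and
convexity on that segment gives `f ((x + z) / 2) + f ((y + z) / 2) ≤ 3 / 2 * f m + 1 / 2 * f z`,
while `f ((x + y) / 2) ≤ (f x + f y) / 2`. Adding the two gives the inequality; the case of two
points above the mean follows by applying this to `t ↦ f (-t)`.
-/

namespace ConvexOn

variable {𝕜 : Type*} [Field 𝕜] [LinearOrder 𝕜] [IsStrictOrderedRing 𝕜]
  {s : Set 𝕜} {f : 𝕜 → 𝕜}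

theorem sub_mul_le_sub_mul_add_sub_mul (hf : ConvexOn 𝕜 s f) {x y z : 𝕜} (hx : x ∈ s)
    (hz : z ∈ s) (hxy : x ≤ y) (hyz : y ≤ z) :
    (z - x) * f y ≤ (z - y) * f x + (y - x) * f z := by
  rcases hxy.eq_or_lt with rfl | hxy
  · simp
  rcases hyz.eq_or_lt with rfl | hyz
  · simp
  exact hf.secant_mono_aux1 hx hz hxy hyz

theorem map_add_div_two_le (hf : ConvexOn 𝕜 s f) {x y : 𝕜} (hx : x ∈ s) (hy : y ∈ s) :
    f ((x + y) / 2) ≤ (f x + f y) / 2 := by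
  have h := hf.2 hx hy (by norm_num : (0 : 𝕜) ≤ 1 / 2) (by norm_num : (0 : 𝕜) ≤ 1 / 2)
    (by norm_num)
  simp only [smul_eq_mul] at h
  convert h using 1 <;> ring_nf

theorem popoviciu_of_le_avg (hf : ConvexOn 𝕜 s f) {x y z : 𝕜} (hx : x ∈ s) (hy : y ∈ s)
    (hz : z ∈ s) (hxm : x ≤ (x + y + z) / 3) (hym : y ≤ (x + y + z) / 3) :
    (2 / 3) * (f ((x + y) / 2) + f ((y + z) / 2) + f ((x + z) / 2)) ≤
      (f x + f y + f z) / 3 + f ((x + y + z) / 3) := by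
  set m := (x + y + z) / 3 with hm
  have hmz : m ≤ z := by linarith
  have hms : m ∈ s := hf.1.ordConnected.out hx hz ⟨hxm, hmz⟩
  rcases hmz.eq_or_lt with hm_eq | hm_lt
  · have hxz : x = z := by linarith
    have hyz : y = z := by linarith
    subst hxz hyz
    rw [hm_eq, add_self_div_two]
    linarith
  have hxz := hf.sub_mul_le_sub_mul_add_sub_mul hms hz (y := (x + z) / 2)
    (by linarith) (by linarith)
  have hyz := hf.sub_mul_le_sub_mul_add_sub_mul hms hz (y := (y + z) / 2)
    (by linarith) (by linarith)
  have hsum : f ((y + z) / 2) + f ((x + z) / 2) ≤ 3 / 2 * f m + 1 / 2 * f z := by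
    refine le_of_mul_le_mul_left ?_ (sub_pos.2 hm_lt)
    linear_combination hxz + hyz
  linarith [hf.map_add_div_two_le hx hy]

theorem popoviciu_of_avg_le (hf : ConvexOn 𝕜 s f) {x y z : 𝕜} (hx : x ∈ s) (hy : y ∈ s)
    (hz : z ∈ s) (hxm : (x + y + z) / 3 ≤ x) (hym : (x + y + z) / 3 ≤ y) :
    (2 / 3) * (f ((x + y) / 2) + f ((y + z) / 2) + f ((x + z) / 2)) ≤
      (f x + f y + f z) / 3 + f ((x + y + z) / 3) := by
  have hf_neg : ConvexOn 𝕜 (-s) (fun x ↦ f (-x)) :=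
    ⟨hf.1.neg, fun x hx y hy a b ha hb hab ↦ by
      simpa only [smul_eq_mul, neg_add, mul_neg] using hf.2 hx hy ha hb hab⟩
  have h := hf_neg.popoviciu_of_le_avg (x := -x) (y := -y) (z := -z)
    (by simpa using hx) (by simpa using hy) (by simpa using hz) (by linarith) (by linarith)
  simpa only [← neg_add, neg_div, neg_neg] using h

theorem popoviciu (hf : ConvexOn 𝕜 s f) {x y z : 𝕜} (hx : x ∈ s) (hy : y ∈ s)
    (hz : z ∈ s) :
    (2 / 3) * (f ((x + y) / 2) + f ((y + z) / 2) + f ((x + z) / 2)) ≤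
      (f x + f y + f z) / 3 + f ((x + y + z) / 3) := by
  rcases le_total x ((x + y + z) / 3) with hxm | hxm <;>
  rcases le_total y ((x + y + z) / 3) with hym | hym
  · exact hf.popoviciu_of_le_avg hx hy hz hxm hym
  · rcases le_total z ((x + y + z) / 3) with hzm | hzm
    · have h := hf.popoviciu_of_le_avg hx hz hy (by linarith) (by linarith)
      ring_nf at h ⊢; linarith
    · have h := hf.popoviciu_of_avg_le hy hz hx (by linarith) (by linarith)
      ring_nf at h ⊢; linarith
  · rcases le_total z ((x + y + z) / 3) with hzm | hzm
    · have h := hf.popoviciu_of_le_avg hy hz hx (by linarith) (by linarith)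
      ring_nf at h ⊢; linarith
    · have h := hf.popoviciu_of_avg_le hx hz hy (by linarith) (by linarith)
      ring_nf at h ⊢; linarith
  · exact hf.popoviciu_of_avg_le hx hy hz hxm hym

end ConvexOn

theorem stmt_5 (I : Set ℝ) (hI : I.OrdConnected)
    (f : ℝ → ℝ)
    (hconv : ∀ x ∈ I, ∀ y ∈ I, ∀ t ∈ Set.Icc (0:ℝ) 1,
      f (t * x + (1 - t) * y) ≤ t * f x + (1 - t) * f y) :
    ∀ x ∈ I, ∀ y ∈ I, ∀ z ∈ I,
      (2 / 3) * (f ((x + y) / 2) + f ((y + z) / 2) + f ((x + z) / 2)) ≤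
        (f x + f y + f z) / 3 + f ((x + y + z) / 3) := by
  have hf : ConvexOn ℝ I f := by
    refine ⟨hI.convex, fun x hx y hy a b ha hb hab ↦ ?_⟩
    obtain rfl : b = 1 - a := by linarith
    simpa only [smul_eq_mul] using hconv x hx y hy a ⟨ha, by linarith⟩
  exact fun x hx y hy z hz ↦ hf.popoviciu hx hy hz
end

section
/- Let f : ℝ → ℝ be continuous on an interval I. If for all x, y, z ∈ I the inequality (f(x)+f(y)+f(z))/3 + f((x+y+z)/3) ≥ (2/3)·(f((x+y)/2) + f((y+z)/2) + f((x+z)/2)) holds, then f is convex on I. -/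
/-!
Subtracting from `f` its chord over `[x, y]` gives a continuous `g` vanishing at `x` and `y` that
still satisfies Popoviciu's inequality, since affine functions satisfy it with equality; it remains
to see that `g ≤ 0` on `[x, y]`. Let `c` be a maximum point of `g`, say in the left half, and apply
the inequality to the triple `(2c - x, 2c - x, x)`: it reads
`4 g(c) ≤ g(x) + 3 g((4c - x) / 3) ≤ 3 g(c)`, so `g(c) ≤ 0`.
-/

open Set

def PopoviciuOn (s : Set ℝ) (f : ℝ → ℝ) : Prop :=
  ∀ x ∈ s, ∀ y ∈ s, ∀ z ∈ s,
    (2 / 3) * (f ((x + y) / 2) + f ((y + z) / 2) + f ((x + z) / 2)) ≤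
      (f x + f y + f z) / 3 + f ((x + y + z) / 3)

namespace PopoviciuOn

variable {s t : Set ℝ} {f : ℝ → ℝ}

theorem mono (hf : PopoviciuOn s f) (hts : t ⊆ s) : PopoviciuOn t f :=
  fun x hx y hy z hz => hf x (hts hx) y (hts hy) z (hts hz)

theorem sub_affine (hf : PopoviciuOn s f) (m k : ℝ) :
    PopoviciuOn s fun u => f u - (m * u + k) := by
  intro x hx y hy z hz
  linarith [hf x hx y hy z hz]

theorem four_mul_le {c e : ℝ} (hf : PopoviciuOn s f) (he : e ∈ s) (hc : 2 * c - e ∈ s) :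
    4 * f c ≤ f e + 3 * f ((4 * c - e) / 3) := by
  have h := hf _ hc _ hc e he
  rw [show (2 * c - e + (2 * c - e)) / 2 = 2 * c - e by ring,
    show (2 * c - e + e) / 2 = c by ring,
    show (2 * c - e + (2 * c - e) + e) / 3 = (4 * c - e) / 3 by ring] at h
  linarith

theorem nonpos_of_isMaxOn {c e : ℝ} (hf : PopoviciuOn s f) (hmax : IsMaxOn f s c)
    (he : e ∈ s) (hfe : f e ≤ 0) (hc : 2 * c - e ∈ s) (hd : (4 * c - e) / 3 ∈ s) :
    f c ≤ 0 := by
  linarith [hf.four_mul_le he hc, isMaxOn_iff.1 hmax _ hd]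

theorem nonpos_of_endpoints {x y : ℝ} (hf : PopoviciuOn (Icc x y) f)
    (hcont : ContinuousOn f (Icc x y)) (hx : f x ≤ 0) (hy : f y ≤ 0) :
    ∀ u ∈ Icc x y, f u ≤ 0 := by
  intro u hu
  have hxy : x ≤ y := hu.1.trans hu.2
  obtain ⟨c, hc, hmax⟩ := isCompact_Icc.exists_isMaxOn ⟨u, hu⟩ hcont
  refine (hmax hu).trans ?_
  obtain ⟨hxc, hcy⟩ := hc
  rcases le_total c ((x + y) / 2) with hleft | hright
  · exact hf.nonpos_of_isMaxOn hmax (left_mem_Icc.2 hxy) hx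
      ⟨by linarith, by linarith⟩ ⟨by linarith, by linarith⟩
  · exact hf.nonpos_of_isMaxOn hmax (right_mem_Icc.2 hxy) hy
      ⟨by linarith, by linarith⟩ ⟨by linarith, by linarith⟩

theorem convexOn (hs : s.OrdConnected) (hf : PopoviciuOn s f) (hcont : ContinuousOn f s) :
    ConvexOn ℝ s f := by
  refine LinearOrder.convexOn_of_lt hs.convex fun x hx y hy hxy a b ha hb hab => ?_
  obtain rfl : b = 1 - a := eq_sub_of_add_eq' hab
  simp only [smul_eq_mul]
  have hyx : y - x ≠ 0 := sub_ne_zero.2 hxy.ne'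
  set m := (f y - f x) / (y - x)
  have hmy : m * y + (f x - m * x) = f y := by
    simp only [m]; field_simp; ring
  have hmem : a * x + (1 - a) * y ∈ Icc x y :=
    ⟨by nlinarith [mul_pos hb (sub_pos.2 hxy)], by nlinarith [mul_pos ha (sub_pos.2 hxy)]⟩
  have hchord := nonpos_of_endpoints (f := fun u => f u - (m * u + (f x - m * x)))
    ((hf.mono (hs.out hx hy)).sub_affine _ _) ((hcont.mono (hs.out hx hy)).sub (by fun_prop))
    (by simp) (by simp [hmy]) _ hmem
  have hline : m * (a * x + (1 - a) * y) + (f x - m * x) = a * f x + (1 - a) * f y := by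
    simp only [m]; field_simp; ring
  linarith

end PopoviciuOn

theorem stmt_6 (I : Set ℝ) (hI : I.OrdConnected)
    (f : ℝ → ℝ) (hcont : ContinuousOn f I)
    (hpop : ∀ x ∈ I, ∀ y ∈ I, ∀ z ∈ I,
      (2 / 3) * (f ((x + y) / 2) + f ((y + z) / 2) + f ((x + z) / 2)) ≤
        (f x + f y + f z) / 3 + f ((x + y + z) / 3)) :
    ∀ x ∈ I, ∀ y ∈ I, ∀ t ∈ Set.Icc (0:ℝ) 1,
      f (t * x + (1 - t) * y) ≤ t * f x + (1 - t) * f y := by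
  intro x hx y hy t ht
  have hconv : ConvexOn ℝ I f := PopoviciuOn.convexOn hI hpop hcont
  simpa only [smul_eq_mul] using
    hconv.2 hx hy ht.1 (sub_nonneg.2 ht.2) (add_sub_cancel t 1)
end

section
/- Let f : [a,b] → ℝ be convex, let x₁,…,xₙ ∈ [a,b], let μ₁,…,μₙ ≥ 0 with ∑μᵢ = 1, and let λ₁, λ₂ ≥ 0 with λ₁ + λ₂ = 1. If ∑μᵢxᵢ = λ₁a + λ₂b, then ∑μᵢ f(xᵢ) ≤ λ₁ f(a) + λ₂ f(b). -/
/-!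
Convexity puts the graph of `f` below the chord through `(a, f a)` and `(b, f b)`. The chord is
affine, so averaging the chord inequality at the points `xᵢ` with the weights `μᵢ` evaluates the
chord at the barycentre `∑ μᵢ xᵢ = λ₁ a + λ₂ b`, where its value is `λ₁ f(a) + λ₂ f(b)`.
-/

open Finset Set

section ChordBound

variable {𝕜 ι : Type*} [Field 𝕜] [LinearOrder 𝕜] [IsStrictOrderedRing 𝕜]
  {s : Set 𝕜} {f : 𝕜 → 𝕜} {a b : 𝕜}

theorem ConvexOn.sub_mul_le_of_mem_Icc (hf : ConvexOn 𝕜 s f) (ha : a ∈ s) (hb : b ∈ s)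
    {y : 𝕜} (hy : y ∈ Icc a b) : (b - a) * f y ≤ (b - y) * f a + (y - a) * f b := by
  rcases hy.1.eq_or_lt with rfl | hay
  · linarith
  rcases hy.2.eq_or_lt with rfl | hyb
  · linarith
  exact hf.secant_mono_aux1 ha hb hay hyb

theorem ConvexOn.sub_mul_sum_le_of_mem_Icc (hf : ConvexOn 𝕜 s f) (ha : a ∈ s) (hb : b ∈ s)
    {t : Finset ι} {w x : ι → 𝕜} (hw : ∀ i ∈ t, 0 ≤ w i) (hw₁ : ∑ i ∈ t, w i = 1)
    (hx : ∀ i ∈ t, x i ∈ Icc a b) :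
    (b - a) * ∑ i ∈ t, w i * f (x i) ≤
      (b - ∑ i ∈ t, w i * x i) * f a + (∑ i ∈ t, w i * x i - a) * f b := by
  calc (b - a) * ∑ i ∈ t, w i * f (x i)
      = ∑ i ∈ t, w i * ((b - a) * f (x i)) := by
        rw [mul_sum]; exact sum_congr rfl fun i _ => by ring
    _ ≤ ∑ i ∈ t, w i * ((b - x i) * f a + (x i - a) * f b) :=
        sum_le_sum fun i hi =>
          mul_le_mul_of_nonneg_left (hf.sub_mul_le_of_mem_Icc ha hb (hx i hi)) (hw i hi)
    _ = (b * ∑ i ∈ t, w i - ∑ i ∈ t, w i * x i) * f a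
          + (∑ i ∈ t, w i * x i - a * ∑ i ∈ t, w i) * f b := by
        simp only [mul_sum, sum_mul, ← sum_sub_distrib, ← sum_add_distrib]
        exact sum_congr rfl fun i _ => by ring
    _ = _ := by rw [hw₁, mul_one, mul_one]

end ChordBound

theorem stmt_7_general (a b : ℝ) (hab : a ≤ b) (f : ℝ → ℝ)
    (hconv : ∀ x ∈ Set.Icc a b, ∀ y ∈ Set.Icc a b, ∀ t ∈ Set.Icc (0:ℝ) 1,
      f (t * x + (1 - t) * y) ≤ t * f x + (1 - t) * f y)
    (n : ℕ) (x : Fin n → ℝ) (hx : ∀ i, x i ∈ Set.Icc a b)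
    (μ : Fin n → ℝ) (hμ : ∀ i, 0 ≤ μ i) (hμ1 : ∑ i, μ i = 1)
    (l₁ l₂ : ℝ) (hl : l₁ + l₂ = 1)
    (hbar : ∑ i, μ i * x i = l₁ * a + l₂ * b) :
    ∑ i, μ i * f (x i) ≤ l₁ * f a + l₂ * f b := by
  have hf : ConvexOn ℝ (Icc a b) f := by
    refine ⟨convex_Icc a b, fun y hy z hz s t hs ht hst => ?_⟩
    obtain rfl : t = 1 - s := by linarith
    simpa using hconv y hy z hz s ⟨hs, by linarith⟩
  rcases hab.eq_or_lt with rfl | hlt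
  · have hxa : ∀ i, x i = a := fun i => le_antisymm (hx i).2 (hx i).1
    simp only [hxa, ← sum_mul, hμ1, one_mul, ← add_mul, hl, le_refl]
  have hchord := hf.sub_mul_sum_le_of_mem_Icc (left_mem_Icc.2 hab) (right_mem_Icc.2 hab)
    (fun i _ => hμ i) hμ1 (fun i _ => hx i)
  rw [hbar] at hchord
  refine le_of_mul_le_mul_left ?_ (sub_pos.2 hlt)
  linear_combination hchord + (a * f b - b * f a) * hl

theorem stmt_7 (a b : ℝ) (hab : a ≤ b) (f : ℝ → ℝ)
    (hconv : ∀ x ∈ Set.Icc a b, ∀ y ∈ Set.Icc a b, ∀ t ∈ Set.Icc (0:ℝ) 1,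
      f (t * x + (1 - t) * y) ≤ t * f x + (1 - t) * f y)
    (n : ℕ) (x : Fin n → ℝ) (hx : ∀ i, x i ∈ Set.Icc a b)
    (μ : Fin n → ℝ) (hμ : ∀ i, 0 ≤ μ i) (hμ1 : ∑ i, μ i = 1)
    (l₁ l₂ : ℝ) (hl₁ : 0 ≤ l₁) (hl₂ : 0 ≤ l₂) (hl : l₁ + l₂ = 1)
    (hbar : ∑ i, μ i * x i = l₁ * a + l₂ * b) :
    ∑ i, μ i * f (x i) ≤ l₁ * f a + l₂ * f b :=
  stmt_7_general a b hab f hconv n x hx μ hμ hμ1 l₁ l₂ hl hbar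
end

section
/- Let f : [a,b] → ℝ be convex and x, y, z ∈ [a,b] with (x+y+z)/3 = (a+b)/2. Then (2/3)·(f((x+y)/2) + f((y+z)/2) + f((x+z)/2)) ≤ f(a) + f(b). -/
/-!
Below the chord, `(b - a) f(m) ≤ (b - m) f(a) + (m - a) f(b)` for every `m ∈ [a, b]`. The right
side is affine in `m`, so summing it over points whose mean is `(a + b) / 2` gives exactly
`(f(a) + f(b)) / 2` per point. The three midpoints `(x + y) / 2`, `(y + z) / 2`, `(x + z) / 2`
have the same mean as `x, y, z`.
-/

open Set Finset

lemma convexOn_Icc_of_forall_le {a b : ℝ} {f : ℝ → ℝ}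
    (hconv : ∀ x ∈ Icc a b, ∀ y ∈ Icc a b, ∀ t ∈ Icc (0:ℝ) 1,
      f (t * x + (1 - t) * y) ≤ t * f x + (1 - t) * f y) :
    ConvexOn ℝ (Icc a b) f := by
  refine ⟨convex_Icc a b, fun x hx y hy s t hs ht hst => ?_⟩
  obtain rfl : t = 1 - s := by linarith
  exact hconv x hx y hy s ⟨hs, by linarith⟩

lemma ConvexOn.mul_le_chord {a b m : ℝ} {f : ℝ → ℝ} (hf : ConvexOn ℝ (Icc a b) f)
    (hm : m ∈ Icc a b) : (b - a) * f m ≤ (b - m) * f a + (m - a) * f b := by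
  obtain ⟨ham, hmb⟩ := hm
  rcases ham.eq_or_lt with rfl | ham
  · linarith
  rcases hmb.eq_or_lt with rfl | hmb
  · linarith
  exact hf.secant_mono_aux1 (left_mem_Icc.2 (ham.trans hmb).le)
    (right_mem_Icc.2 (ham.trans hmb).le) ham hmb

lemma ConvexOn.sum_le_of_sum_eq_card_mul_midpoint {a b : ℝ} {f : ℝ → ℝ}
    (hf : ConvexOn ℝ (Icc a b) f) {ι : Type*} (s : Finset ι) (m : ι → ℝ)
    (hm : ∀ i ∈ s, m i ∈ Icc a b) (hsum : ∑ i ∈ s, m i = #s * ((a + b) / 2)) :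
    ∑ i ∈ s, f (m i) ≤ #s / 2 * (f a + f b) := by
  rcases lt_trichotomy a b with hab | rfl | hba
  · have key : (b - a) * ∑ i ∈ s, f (m i) ≤ (b - a) * (#s / 2 * (f a + f b)) :=
      calc (b - a) * ∑ i ∈ s, f (m i) = ∑ i ∈ s, (b - a) * f (m i) := mul_sum _ _ _
        _ ≤ ∑ i ∈ s, ((b - m i) * f a + (m i - a) * f b) :=
          sum_le_sum fun i hi => hf.mul_le_chord (hm i hi)
        _ = (#s * b - ∑ i ∈ s, m i) * f a + (∑ i ∈ s, m i - #s * a) * f b := by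
          simp only [sum_add_distrib, ← sum_mul, sum_sub_distrib, sum_const, nsmul_eq_mul]
        _ = (b - a) * (#s / 2 * (f a + f b)) := by rw [hsum]; ring
    exact le_of_mul_le_mul_left key (sub_pos.2 hab)
  · have hma : ∀ i ∈ s, m i = a := fun i hi => (Icc_self a ▸ hm i hi : m i ∈ ({a} : Set ℝ))
    rw [sum_congr rfl fun i hi => congrArg f (hma i hi), sum_const, nsmul_eq_mul]
    exact le_of_eq (by ring)
  · have hs : s = ∅ := eq_empty_of_forall_notMem fun i hi => (Icc_eq_empty_of_lt hba ▸ hm i hi).elim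
    simp [hs]

theorem stmt_8_general (a b : ℝ) (f : ℝ → ℝ)
    (hconv : ∀ x ∈ Set.Icc a b, ∀ y ∈ Set.Icc a b, ∀ t ∈ Set.Icc (0:ℝ) 1,
      f (t * x + (1 - t) * y) ≤ t * f x + (1 - t) * f y)
    (x y z : ℝ) (hx : x ∈ Set.Icc a b) (hy : y ∈ Set.Icc a b)
    (hz : z ∈ Set.Icc a b) (hc : (x + y + z) / 3 = (a + b) / 2) :
    (2 / 3) * (f ((x + y) / 2) + f ((y + z) / 2) + f ((x + z) / 2)) ≤ f a + f b := by
  have hmid : ∀ u ∈ Icc a b, ∀ v ∈ Icc a b, (u + v) / 2 ∈ Icc a b := fun u hu v hv =>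
    ⟨by linarith [hu.1, hv.1], by linarith [hu.2, hv.2]⟩
  have h := (convexOn_Icc_of_forall_le hconv).sum_le_of_sum_eq_card_mul_midpoint univ
    ![(x + y) / 2, (y + z) / 2, (x + z) / 2]
    (fun i _ => by fin_cases i; exacts [hmid x hx y hy, hmid y hy z hz, hmid x hx z hz])
    (by simp only [Fin.sum_univ_three, Matrix.cons_val_zero, Matrix.cons_val_one, Matrix.cons_val,
      card_univ, Fintype.card_fin]; linarith)
  simp only [Fin.sum_univ_three, Matrix.cons_val_zero, Matrix.cons_val_one, Matrix.cons_val,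
    card_univ, Fintype.card_fin] at h
  linarith

theorem stmt_8 (a b : ℝ) (hab : a ≤ b) (f : ℝ → ℝ)
    (hconv : ∀ x ∈ Set.Icc a b, ∀ y ∈ Set.Icc a b, ∀ t ∈ Set.Icc (0:ℝ) 1,
      f (t * x + (1 - t) * y) ≤ t * f x + (1 - t) * f y)
    (x y z : ℝ) (hx : x ∈ Set.Icc a b) (hy : y ∈ Set.Icc a b)
    (hz : z ∈ Set.Icc a b) (hc : (x + y + z) / 3 = (a + b) / 2) :
    (2 / 3) * (f ((x + y) / 2) + f ((y + z) / 2) + f ((x + z) / 2)) ≤ f a + f b :=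
  stmt_8_general a b f hconv x y z hx hy hz hc
end

section
/- Let f : [a,b] → ℝ be convex and x, y, z ∈ [a,b] with (x+y+z)/3 = (a+b)/2. Then 2·(f(x)+f(y)+f(z))/3 ≤ f(a) + f(b) and 2·f((x+y+z)/3) ≤ f(a) + f(b). -/
/-!
Every value `f u` with `u ∈ [a, b]` lies below the chord through `(a, f a)` and `(b, f b)`.
The chord is affine, so averaging it over points whose mean is `(a + b) / 2` gives its value at
the midpoint, `(f a + f b) / 2`. The second inequality is the case of the single point
`(x + y + z) / 3`.
-/

open Finset Set

section LinearOrderedField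

variable {𝕜 : Type*} [Field 𝕜] [LinearOrder 𝕜] [IsStrictOrderedRing 𝕜] {f : 𝕜 → 𝕜}

theorem convexOn_of_forall_one_sub {s : Set 𝕜} (hs : Convex 𝕜 s)
    (hf : ∀ x ∈ s, ∀ y ∈ s, ∀ t ∈ Icc (0 : 𝕜) 1,
      f (t * x + (1 - t) * y) ≤ t * f x + (1 - t) * f y) :
    ConvexOn 𝕜 s f := by
  refine ⟨hs, fun x hx y hy t u ht hu htu => ?_⟩
  obtain rfl : u = 1 - t := by rw [← htu, add_sub_cancel_left]
  exact hf x hx y hy t ⟨ht, by linarith⟩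

theorem ConvexOn.mul_le_secant_of_mem_Icc {s : Set 𝕜} (hf : ConvexOn 𝕜 s f) {x y z : 𝕜}
    (hx : x ∈ s) (hz : z ∈ s) (hy : y ∈ Icc x z) :
    (z - x) * f y ≤ (z - y) * f x + (y - x) * f z := by
  rcases hy.1.eq_or_lt with rfl | hxy
  · simp
  rcases hy.2.eq_or_lt with rfl | hyz
  · simp
  exact hf.secant_mono_aux1 hx hz hxy hyz

theorem ConvexOn.two_mul_sum_le_of_two_mul_sum_eq {ι : Type*} {a b : 𝕜}
    (hf : ConvexOn 𝕜 (Icc a b) f) (s : Finset ι) {p : ι → 𝕜} (hp : ∀ i ∈ s, p i ∈ Icc a b)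
    (hmean : 2 * ∑ i ∈ s, p i = #s * (a + b)) :
    2 * ∑ i ∈ s, f (p i) ≤ #s * (f a + f b) := by
  rcases s.eq_empty_or_nonempty with rfl | ⟨i₀, hi₀⟩
  · simp
  have hab : a ≤ b := (hp i₀ hi₀).1.trans (hp i₀ hi₀).2
  rcases hab.eq_or_lt with rfl | hab
  · have hpa : ∀ i ∈ s, p i = a := fun i hi => le_antisymm (hp i hi).2 (hp i hi).1
    rw [sum_congr rfl fun i hi => by rw [hpa i hi], sum_const, nsmul_eq_mul]
    linarith
  have hsecant : (b - a) * ∑ i ∈ s, f (p i) ≤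
      (#s * b - ∑ i ∈ s, p i) * f a + (∑ i ∈ s, p i - #s * a) * f b := by
    calc (b - a) * ∑ i ∈ s, f (p i)
        ≤ ∑ i ∈ s, ((b - p i) * f a + (p i - a) * f b) := by
          rw [mul_sum]
          exact sum_le_sum fun i hi =>
            hf.mul_le_secant_of_mem_Icc (left_mem_Icc.2 hab.le) (right_mem_Icc.2 hab.le) (hp i hi)
      _ = (#s * b - ∑ i ∈ s, p i) * f a + (∑ i ∈ s, p i - #s * a) * f b := by
          simp only [sum_add_distrib, ← sum_mul, sum_sub_distrib, sum_const, nsmul_eq_mul]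
  refine le_of_mul_le_mul_left ?_ (sub_pos.2 hab)
  linear_combination 2 * hsecant + (f b - f a) * hmean

end LinearOrderedField

theorem stmt_9_general (a b : ℝ) (f : ℝ → ℝ)
    (hconv : ∀ x ∈ Set.Icc a b, ∀ y ∈ Set.Icc a b, ∀ t ∈ Set.Icc (0:ℝ) 1,
      f (t * x + (1 - t) * y) ≤ t * f x + (1 - t) * f y)
    (x y z : ℝ) (hx : x ∈ Set.Icc a b) (hy : y ∈ Set.Icc a b)
    (hz : z ∈ Set.Icc a b) (hc : (x + y + z) / 3 = (a + b) / 2) :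
    2 * ((f x + f y + f z) / 3) ≤ f a + f b ∧
    2 * f ((x + y + z) / 3) ≤ f a + f b := by
  have hf : ConvexOn ℝ (Icc a b) f := convexOn_of_forall_one_sub (convex_Icc a b) hconv
  have hxyz := hf.two_mul_sum_le_of_two_mul_sum_eq univ (p := ![x, y, z])
    (by simpa [Fin.forall_fin_succ] using ⟨hx, hy, hz⟩)
    (by rw [Fin.sum_univ_three, card_fin]; push_cast; linear_combination 6 * hc)
  have hmean := hf.two_mul_sum_le_of_two_mul_sum_eq {()} (p := fun _ => (x + y + z) / 3)
    (fun _ _ => ⟨by linarith [hx.1, hy.1, hz.1], by linarith [hx.2, hy.2, hz.2]⟩)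
    (by rw [sum_singleton, Finset.card_singleton, hc]; push_cast; ring)
  rw [Fin.sum_univ_three, card_fin] at hxyz
  rw [sum_singleton, Finset.card_singleton, Nat.cast_one, one_mul] at hmean
  exact ⟨by push_cast at hxyz; linarith, hmean⟩

theorem stmt_9 (a b : ℝ) (hab : a ≤ b) (f : ℝ → ℝ)
    (hconv : ∀ x ∈ Set.Icc a b, ∀ y ∈ Set.Icc a b, ∀ t ∈ Set.Icc (0:ℝ) 1,
      f (t * x + (1 - t) * y) ≤ t * f x + (1 - t) * f y)
    (x y z : ℝ) (hx : x ∈ Set.Icc a b) (hy : y ∈ Set.Icc a b)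
    (hz : z ∈ Set.Icc a b) (hc : (x + y + z) / 3 = (a + b) / 2) :
    2 * ((f x + f y + f z) / 3) ≤ f a + f b ∧
    2 * f ((x + y + z) / 3) ≤ f a + f b :=
  stmt_9_general a b f hconv x y z hx hy hz hc
end

section
/- Let F : I → Set ℝ be a convex set-valued function on an interval I, i.e., t•F(x) + (1−t)•F(y) ⊆ F(tx+(1−t)y) for all x, y ∈ I, t ∈ [0,1]. Then for all x, y, z ∈ I: (1/3)•F(x) + (1/3)•F(y) + (1/3)•F(z) + F((x+y+z)/3) ⊆ (2/3)•(F((x+y)/2) + F((y+z)/2) + F((x+z)/2)). -/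
/-!
Put `m = (x + y + z) / 3`. Two of `x, y, z`, say `x` and `y`, lie on the same side of `m`: the
three pairwise products of `x - m, y - m, z - m` cannot all be negative, since their product is a
square. Then `m` lies between `x` and `z`, and both `(x + z) / 2` and `(y + z) / 2` lie on the
segment `[m, z]`. Writing them as convex combinations of `m` and `z`, the weights on `z` add up to
`1 / 2`, so the same combinations of values `d ∈ F m` and `c ∈ F z` sum to `(3 d + c) / 2`; a
value at `(x + y) / 2` is the average of values at `x` and `y`.
-/

open Pointwise Set

theorem mul_nonneg_or_mul_nonneg_or_mul_nonneg {α : Type*} [CommRing α] [LinearOrder α]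
    [IsStrictOrderedRing α] (a b c : α) : 0 ≤ a * b ∨ 0 ≤ b * c ∨ 0 ≤ a * c := by
  by_contra! h
  obtain ⟨hab, hbc, hac⟩ := h
  have hprod : (a * b) * (b * c) * (a * c) < 0 :=
    mul_neg_of_pos_of_neg (mul_pos_of_neg_of_neg hab hbc) hac
  nlinarith [sq_nonneg (a * b * c)]

def SetValuedConvexOn (I : Set ℝ) (F : ℝ → Set ℝ) : Prop :=
  ∀ x ∈ I, ∀ y ∈ I, ∀ t ∈ Icc (0 : ℝ) 1, t • F x + (1 - t) • F y ⊆ F (t * x + (1 - t) * y)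

namespace SetValuedConvexOn

variable {I : Set ℝ} {F : ℝ → Set ℝ}

theorem combo_mem (hF : SetValuedConvexOn I F) {x y a b u v : ℝ} (hx : x ∈ I) (hy : y ∈ I)
    (ha : 0 ≤ a) (hb : 0 ≤ b) (hab : a + b = 1) (hu : u ∈ F x) (hv : v ∈ F y) :
    a * u + b * v ∈ F (a * x + b * y) := by
  obtain rfl : b = 1 - a := by linarith
  exact hF x hx y hy a ⟨ha, by linarith⟩ (add_mem_add (smul_mem_smul_set hu) (smul_mem_smul_set hv))

theorem exists_add_eq_of_mem_segment (hF : SetValuedConvexOn I F) {m p s₁ s₂ c d : ℝ}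
    (hm : m ∈ I) (hp : p ∈ I) (hs₁ : s₁ ∈ segment ℝ m p) (hs₂ : s₂ ∈ segment ℝ m p)
    (hs : s₁ + s₂ = (3 * m + p) / 2) (hd : d ∈ F m) (hc : c ∈ F p) :
    ∃ v ∈ F s₁, ∃ w ∈ F s₂, v + w = (3 * d + c) / 2 := by
  obtain ⟨a₁, b₁, ha₁, hb₁, hab₁, rfl⟩ := hs₁
  obtain ⟨a₂, b₂, ha₂, hb₂, hab₂, rfl⟩ := hs₂
  simp only [smul_eq_mul] at hs ⊢
  rcases eq_or_ne m p with rfl | hmp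
  · have hmem := hF.combo_mem hm hm (a := 3 / 4) (b := 1 / 4) (by norm_num) (by norm_num)
      (by norm_num) hd hc
    rw [← add_mul, hab₁, one_mul, ← add_mul, hab₂, one_mul]
    rw [show 3 / 4 * m + 1 / 4 * m = m by ring] at hmem
    exact ⟨_, hmem, _, hmem, by ring⟩
  · have hb : b₁ + b₂ = 1 / 2 := by
      apply mul_right_cancel₀ (sub_ne_zero.2 hmp.symm)
      linear_combination hs - m * hab₁ - m * hab₂
    exact ⟨_, hF.combo_mem hm hp ha₁ hb₁ hab₁ hd hc, _, hF.combo_mem hm hp ha₂ hb₂ hab₂ hd hc,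
      by linear_combination d * hab₁ + d * hab₂ + (c - d) * hb⟩

theorem exists_mem_midpoints (hF : SetValuedConvexOn I F) (hI : I.OrdConnected)
    {x y z m a b c d : ℝ} (hx : x ∈ I) (hy : y ∈ I) (hz : z ∈ I) (hm : x + y + z = 3 * m)
    (hxy : 0 ≤ (x - m) * (y - m)) (ha : a ∈ F x) (hb : b ∈ F y) (hc : c ∈ F z) (hd : d ∈ F m) :
    ∃ u ∈ F ((x + y) / 2), ∃ v ∈ F ((y + z) / 2), ∃ w ∈ F ((x + z) / 2),
      a + b + c + 3 * d = 2 * (u + v + w) := by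
  have hmid : m ∈ uIcc x z ∧ (y + z) / 2 ∈ uIcc m z ∧ (x + z) / 2 ∈ uIcc m z := by
    simp only [mem_uIcc]
    rcases mul_nonneg_iff.1 hxy with ⟨hxm, hym⟩ | ⟨hxm, hym⟩
    · refine ⟨Or.inr ⟨?_, ?_⟩, Or.inr ⟨?_, ?_⟩, Or.inr ⟨?_, ?_⟩⟩ <;> linarith
    · refine ⟨Or.inl ⟨?_, ?_⟩, Or.inl ⟨?_, ?_⟩, Or.inl ⟨?_, ?_⟩⟩ <;> linarith
  obtain ⟨hmI, hv, hw⟩ := hmid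
  rw [← segment_eq_uIcc] at hv hw
  obtain ⟨v, hv, w, hw, hvw⟩ :=
    hF.exists_add_eq_of_mem_segment (hI.uIcc_subset hx hz hmI) hz hv hw (by linarith) hd hc
  have hu := hF.combo_mem hx hy (a := 1 / 2) (b := 1 / 2) (by norm_num) (by norm_num)
    (by norm_num) ha hb
  rw [← mul_add, one_div_mul_eq_div] at hu
  exact ⟨_, hu, v, hv, w, hw, by linarith⟩

end SetValuedConvexOn

theorem stmt_12 (I : Set ℝ) (hI : I.OrdConnected)
    (F : ℝ → Set ℝ)
    (hconv : ∀ x ∈ I, ∀ y ∈ I, ∀ t ∈ Set.Icc (0:ℝ) 1,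
      t • F x + (1 - t) • F y ⊆ F (t * x + (1 - t) * y)) :
    ∀ x ∈ I, ∀ y ∈ I, ∀ z ∈ I,
      (1 / 3 : ℝ) • F x + (1 / 3 : ℝ) • F y + (1 / 3 : ℝ) • F z +
        F ((x + y + z) / 3) ⊆
      (2 / 3 : ℝ) • (F ((x + y) / 2) + F ((y + z) / 2) + F ((x + z) / 2)) := by
  have hF : SetValuedConvexOn I F := hconv
  rintro x hx y hy z hz _ ⟨_, ⟨_, ⟨_, ⟨a, ha, rfl⟩, _, ⟨b, hb, rfl⟩, rfl⟩, _, ⟨c, hc, rfl⟩, rfl⟩,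
    d, hd, rfl⟩
  set m := (x + y + z) / 3
  have hm : x + y + z = 3 * m := by ring
  obtain ⟨u, hu, v, hv, w, hw, huvw⟩ : ∃ u ∈ F ((x + y) / 2), ∃ v ∈ F ((y + z) / 2),
      ∃ w ∈ F ((x + z) / 2), a + b + c + 3 * d = 2 * (u + v + w) := by
    rcases mul_nonneg_or_mul_nonneg_or_mul_nonneg (x - m) (y - m) (z - m) with h | h | h
    · exact hF.exists_mem_midpoints hI hx hy hz hm h ha hb hc hd
    · obtain ⟨v, hv, w, hw, u, hu, h⟩ :=
        hF.exists_mem_midpoints hI hy hz hx (by linarith) h hb hc ha hd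
      rw [add_comm z x] at hw
      rw [add_comm y x] at hu
      exact ⟨u, hu, v, hv, w, hw, by linarith⟩
    · obtain ⟨w, hw, v, hv, u, hu, h⟩ :=
        hF.exists_mem_midpoints hI hx hz hy (by linarith) h ha hc hb hd
      rw [add_comm z y] at hv
      exact ⟨u, hu, v, hv, w, hw, by linarith⟩
  exact ⟨u + v + w, add_mem_add (add_mem_add hu hv) hw, by simp only [smul_eq_mul]; linarith⟩
end

section
/- Let F : [a,b] → Set ℝ with F(x) = Set.Icc (f₁ x) (f₂ x), where f₁ is convex, f₂ is concave, and f₁ ≤ f₂ on [a,b]. Let x₁,…,xₙ ∈ [a,b], μ₁,…,μₙ ≥ 0 with ∑μᵢ = 1, and λ₁, λ₂ ≥ 0 with λ₁ + λ₂ = 1. If ∑μᵢxᵢ = λ₁a + λ₂b, then λ₁•F(a) + λ₂•F(b) ⊆ ∑ᵢ μᵢ•F(xᵢ). -/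
/-!
Both sides are intervals. On `[a, b]` the convex `f₁` lies below its chord and the concave `f₂`
above its chord; the chords are affine, so averaging with the weights `μᵢ` and using
`∑ μᵢ xᵢ = λ₁ a + λ₂ b` gives `∑ μᵢ f₁(xᵢ) ≤ λ₁ f₁(a) + λ₂ f₁(b)` and
`λ₁ f₂(a) + λ₂ f₂(b) ≤ ∑ μᵢ f₂(xᵢ)`. The right-hand side is convex and contains the two endpoint
sums, hence the whole interval between them.
-/

open Pointwise Set

lemma convexOn_of_forall_mem_Icc {s : Set ℝ} {f : ℝ → ℝ} (hs : Convex ℝ s)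
    (hf : ∀ x ∈ s, ∀ y ∈ s, ∀ t ∈ Icc (0 : ℝ) 1,
      f (t * x + (1 - t) * y) ≤ t * f x + (1 - t) * f y) :
    ConvexOn ℝ s f := by
  refine ⟨hs, fun x hx y hy t u ht hu htu => ?_⟩
  obtain rfl : u = 1 - t := by linarith
  exact hf x hx y hy t ⟨ht, by linarith⟩

lemma concaveOn_of_forall_mem_Icc {s : Set ℝ} {f : ℝ → ℝ} (hs : Convex ℝ s)
    (hf : ∀ x ∈ s, ∀ y ∈ s, ∀ t ∈ Icc (0 : ℝ) 1,
      t * f x + (1 - t) * f y ≤ f (t * x + (1 - t) * y)) :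
    ConcaveOn ℝ s f := by
  refine ⟨hs, fun x hx y hy t u ht hu htu => ?_⟩
  obtain rfl : u = 1 - t := by linarith
  exact hf x hx y hy t ⟨ht, by linarith⟩

lemma ConvexOn.le_add_slope_mul {f : ℝ → ℝ} {a b x : ℝ} (hf : ConvexOn ℝ (Icc a b) f)
    (hx : x ∈ Icc a b) : f x ≤ f a + slope f a b * (x - a) := by
  rcases hx.1.eq_or_lt with rfl | hax
  · simp
  have ha : a ∈ Icc a b := ⟨le_rfl, hax.le.trans hx.2⟩
  have hb : b ∈ Icc a b := ⟨ha.2, le_rfl⟩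
  have hsecant := hf.secant_mono ha hx hb hax.ne' (hax.trans_le hx.2).ne' hx.2
  rw [div_le_iff₀ (sub_pos.2 hax)] at hsecant
  rw [slope_def_field]
  linarith

/-- The Edmundson–Madansky converse of Jensen's inequality. -/
lemma ConvexOn.sum_mul_le_of_sum_mul_eq {ι : Type*} {s : Finset ι} {f : ℝ → ℝ}
    {a b l₁ l₂ : ℝ} {μ x : ι → ℝ} (hf : ConvexOn ℝ (Icc a b) f) (hx : ∀ i ∈ s, x i ∈ Icc a b)
    (hμ : ∀ i ∈ s, 0 ≤ μ i) (hμ1 : ∑ i ∈ s, μ i = 1) (hl : l₁ + l₂ = 1)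
    (hbar : ∑ i ∈ s, μ i * x i = l₁ * a + l₂ * b) :
    ∑ i ∈ s, μ i * f (x i) ≤ l₁ * f a + l₂ * f b := by
  have hchord : ∑ i ∈ s, μ i * (f a + slope f a b * (x i - a))
      = f a + slope f a b * (∑ i ∈ s, μ i * x i - a) := by
    have hterm : ∀ i, μ i * (f a + slope f a b * (x i - a))
        = (f a - slope f a b * a) * μ i + slope f a b * (μ i * x i) := fun i => by ring
    simp only [hterm, Finset.sum_add_distrib, ← Finset.mul_sum, hμ1]
    ring
  have hslope : (b - a) * slope f a b = f b - f a := sub_smul_slope f a b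
  calc ∑ i ∈ s, μ i * f (x i) ≤ ∑ i ∈ s, μ i * (f a + slope f a b * (x i - a)) :=
        Finset.sum_le_sum fun i hi =>
          mul_le_mul_of_nonneg_left (hf.le_add_slope_mul (hx i hi)) (hμ i hi)
    _ = l₁ * f a + l₂ * f b := by
        rw [hchord, hbar]
        linear_combination l₂ * hslope + (slope f a b * a - f a) * hl

lemma ConcaveOn.le_sum_mul_of_sum_mul_eq {ι : Type*} {s : Finset ι} {f : ℝ → ℝ}
    {a b l₁ l₂ : ℝ} {μ x : ι → ℝ} (hf : ConcaveOn ℝ (Icc a b) f) (hx : ∀ i ∈ s, x i ∈ Icc a b)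
    (hμ : ∀ i ∈ s, 0 ≤ μ i) (hμ1 : ∑ i ∈ s, μ i = 1) (hl : l₁ + l₂ = 1)
    (hbar : ∑ i ∈ s, μ i * x i = l₁ * a + l₂ * b) :
    l₁ * f a + l₂ * f b ≤ ∑ i ∈ s, μ i * f (x i) := by
  have h := hf.neg.sum_mul_le_of_sum_mul_eq hx hμ hμ1 hl hbar
  simp only [Pi.neg_apply, mul_neg, Finset.sum_neg_distrib] at h
  linarith

lemma Icc_sum_subset_sum_smul_Icc {ι : Type*} (s : Finset ι) (μ u v : ι → ℝ)
    (huv : ∀ i ∈ s, u i ≤ v i) :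
    Icc (∑ i ∈ s, μ i * u i) (∑ i ∈ s, μ i * v i) ⊆ ∑ i ∈ s, μ i • Icc (u i) (v i) := by
  have hconvex : Convex ℝ (∑ i ∈ s, μ i • Icc (u i) (v i)) :=
    convex_sum _ fun i _ => (convex_Icc _ _).smul _
  refine hconvex.ordConnected.out ?_ ?_ <;>
    refine finsetSum_mem_finsetSum _ _ _ fun i hi => smul_mem_smul_set ?_
  exacts [⟨le_rfl, huv i hi⟩, ⟨huv i hi, le_rfl⟩]

lemma smul_Icc_add_smul_Icc_subset {l₁ l₂ : ℝ} (hl₁ : 0 ≤ l₁) (hl₂ : 0 ≤ l₂) (p q r s : ℝ) :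
    l₁ • Icc p q + l₂ • Icc r s ⊆ Icc (l₁ * p + l₂ * r) (l₁ * q + l₂ * s) := by
  rintro _ ⟨_, ⟨y, ⟨hpy, hyq⟩, rfl⟩, _, ⟨z, ⟨hrz, hzs⟩, rfl⟩, rfl⟩
  simp only [smul_eq_mul]
  constructor <;> gcongr

theorem stmt_13 (a b : ℝ) (hab : a ≤ b)
    (f₁ f₂ : ℝ → ℝ) (F : ℝ → Set ℝ)
    (hF : ∀ x ∈ Set.Icc a b, F x = Set.Icc (f₁ x) (f₂ x))
    (hconv : ∀ x ∈ Set.Icc a b, ∀ y ∈ Set.Icc a b, ∀ t ∈ Set.Icc (0:ℝ) 1,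
      f₁ (t * x + (1 - t) * y) ≤ t * f₁ x + (1 - t) * f₁ y)
    (hconc : ∀ x ∈ Set.Icc a b, ∀ y ∈ Set.Icc a b, ∀ t ∈ Set.Icc (0:ℝ) 1,
      t * f₂ x + (1 - t) * f₂ y ≤ f₂ (t * x + (1 - t) * y))
    (hle : ∀ x ∈ Set.Icc a b, f₁ x ≤ f₂ x)
    (n : ℕ) (x : Fin n → ℝ) (hx : ∀ i, x i ∈ Set.Icc a b)
    (μ : Fin n → ℝ) (hμ : ∀ i, 0 ≤ μ i) (hμ1 : ∑ i, μ i = 1)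
    (l₁ l₂ : ℝ) (hl₁ : 0 ≤ l₁) (hl₂ : 0 ≤ l₂) (hl : l₁ + l₂ = 1)
    (hbar : ∑ i, μ i * x i = l₁ * a + l₂ * b) :
    l₁ • F a + l₂ • F b ⊆ ∑ i, μ i • F (x i) := by
  have hf₁ : ConvexOn ℝ (Icc a b) f₁ := convexOn_of_forall_mem_Icc (convex_Icc a b) hconv
  have hf₂ : ConcaveOn ℝ (Icc a b) f₂ := concaveOn_of_forall_mem_Icc (convex_Icc a b) hconc
  have hRHS : ∑ i, μ i • F (x i) = ∑ i, μ i • Icc (f₁ (x i)) (f₂ (x i)) :=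
    Finset.sum_congr rfl fun i _ => by rw [hF _ (hx i)]
  rw [hF a (left_mem_Icc.2 hab), hF b (right_mem_Icc.2 hab), hRHS]
  refine (smul_Icc_add_smul_Icc_subset hl₁ hl₂ _ _ _ _).trans <|
    (Icc_subset_Icc ?_ ?_).trans <| Icc_sum_subset_sum_smul_Icc _ _ _ _ fun i _ => hle _ (hx i)
  · exact hf₁.sum_mul_le_of_sum_mul_eq (fun i _ => hx i) (fun i _ => hμ i) hμ1 hl hbar
  · exact hf₂.le_sum_mul_of_sum_mul_eq (fun i _ => hx i) (fun i _ => hμ i) hμ1 hl hbar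
end
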